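/- At every point A of the open set U = {A ∈ ℝⁿ : 0 < Aᵢ < Nᵢ for all i, 0 < M1 − Σᵢ Aᵢ < n0}, the GL odds-ratio objective G is differentiable and its gradient is the GL residual map g(A), whose i-th component is −Lᵢ − log(a0(A)) − log(Bᵢ(A)) + log(Aᵢ) + log(b0(A)). In other words, the root-finding problem g(A) = 0 of Greenland–Longnecker is exactly the stationarity condition ∇G(A) = 0. -/

import Mathlib

/-!
Write `φ t = t log t - t`, so that `φ' = log`. Then
`G(A) = -⟪L, A⟫ + φ(a₀(A)) + ∑ᵢ φ(Bᵢ(A)) + ∑ᵢ φ(Aᵢ) + φ(b₀(A))`, and every argument of `φ` is affine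
in `A`: `a₀` has gradient `-∑ⱼ eⱼ`, `Bᵢ` has `-eᵢ`, `Aᵢ` has `eᵢ` and `b₀` has `∑ⱼ eⱼ`. By the chain
rule each term contributes the logarithm of its argument times that gradient, and collecting the
`eᵢ`-components gives `g(A)ᵢ`.
-/

open Finset

/-- The Greenland–Longnecker odds-ratio objective `G`, defined on Euclidean space. -/
noncomputable def glOR_G (n : ℕ) (L N : Fin n → ℝ) (n0 M1 : ℝ)
    (A : EuclideanSpace ℝ (Fin n)) : ℝ :=
  -(∑ i, L i * A i)
    + ((M1 - ∑ i, A i) * Real.log (M1 - ∑ i, A i) - (M1 - ∑ i, A i))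
    + (∑ i, ((N i - A i) * Real.log (N i - A i) - (N i - A i)))
    + (∑ i, (A i * Real.log (A i) - A i))
    + ((n0 - (M1 - ∑ i, A i)) * Real.log (n0 - (M1 - ∑ i, A i))
        - (n0 - (M1 - ∑ i, A i)))

/-- The Greenland–Longnecker residual map `g`:
`g(A)ᵢ = -Lᵢ - log a₀(A) - log Bᵢ(A) + log Aᵢ + log b₀(A)`. -/
noncomputable def glOR_g (n : ℕ) (L N : Fin n → ℝ) (n0 M1 : ℝ)
    (A : EuclideanSpace ℝ (Fin n)) : EuclideanSpace ℝ (Fin n) :=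
  WithLp.toLp 2 fun i => -L i - Real.log (M1 - ∑ j, A j) - Real.log (N i - A i)
    + Real.log (A i) + Real.log (n0 - (M1 - ∑ j, A j))

section GradientCalculus

variable {𝕜 F : Type*} [RCLike 𝕜] [NormedAddCommGroup F] [InnerProductSpace 𝕜 F]
  [CompleteSpace F] {f g : F → 𝕜} {f' g' x : F}

theorem HasGradientAt.add (hf : HasGradientAt f f' x) (hg : HasGradientAt g g' x) :
    HasGradientAt (fun y => f y + g y) (f' + g') x := by
  rw [hasGradientAt_iff_hasFDerivAt, map_add]
  exact HasFDerivAt.add hf hg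

theorem HasGradientAt.sum {ι : Type*} {u : Finset ι} {f : ι → F → 𝕜} {f' : ι → F}
    (h : ∀ i ∈ u, HasGradientAt (f i) (f' i) x) :
    HasGradientAt (fun y => ∑ i ∈ u, f i y) (∑ i ∈ u, f' i) x := by
  rw [hasGradientAt_iff_hasFDerivAt, map_sum]
  exact HasFDerivAt.fun_sum h

theorem HasGradientAt.neg (hf : HasGradientAt f f' x) :
    HasGradientAt (fun y => -f y) (-f') x := by
  rw [hasGradientAt_iff_hasFDerivAt, map_neg]
  exact HasFDerivAt.neg hf

theorem HasGradientAt.const_sub (c : 𝕜) (hf : HasGradientAt f f' x) :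
    HasGradientAt (fun y => c - f y) (-f') x := by
  rw [hasGradientAt_iff_hasFDerivAt, map_neg]
  exact HasFDerivAt.const_sub hf c

end GradientCalculus

section RealGradientCalculus

variable {F : Type*} [NormedAddCommGroup F] [InnerProductSpace ℝ F] [CompleteSpace F]
  {f : F → ℝ} {f' : F}

theorem HasDerivAt.comp_hasGradientAt (x : F) {φ : ℝ → ℝ} {φ' : ℝ}
    (hφ : HasDerivAt φ φ' (f x)) (hf : HasGradientAt f f' x) :
    HasGradientAt (fun y => φ (f y)) (φ' • f') x := by
  rw [hasGradientAt_iff_hasFDerivAt, map_smul]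
  exact hφ.comp_hasFDerivAt x hf

theorem HasGradientAt.const_mul {x : F} (c : ℝ) (hf : HasGradientAt f f' x) :
    HasGradientAt (fun y => c * f y) (c • f') x := by
  rw [hasGradientAt_iff_hasFDerivAt, map_smul]
  exact HasFDerivAt.const_mul hf c

end RealGradientCalculus

theorem EuclideanSpace.hasGradientAt_apply {𝕜 ι : Type*} [RCLike 𝕜] [Fintype ι] [DecidableEq ι]
    (i : ι) (x : EuclideanSpace 𝕜 ι) :
    HasGradientAt (fun y : EuclideanSpace 𝕜 ι => y i) (EuclideanSpace.single i 1) x := by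
  refine (EuclideanSpace.proj (𝕜 := 𝕜) i).hasFDerivAt.congr_fderiv ?_
  ext v
  simp [EuclideanSpace.inner_single_left]

theorem Real.hasDerivAt_mul_log_sub_self {x : ℝ} (hx : x ≠ 0) :
    HasDerivAt (fun y => y * Real.log y - y) (Real.log x) x := by
  simpa using (Real.hasDerivAt_mul_log hx).fun_sub (hasDerivAt_id' x)

theorem glOR_hasGradientAt_general
    (n : ℕ) (L N : Fin n → ℝ)
    (n0 M1 : ℝ)
    (A : EuclideanSpace ℝ (Fin n))
    (hA : (∀ i, 0 < A i ∧ A i < N i) ∧ 0 < M1 - ∑ i, A i ∧ M1 - ∑ i, A i < n0) :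
    HasGradientAt (glOR_G n L N n0 M1) (glOR_g n L N n0 M1 A) A := by
  obtain ⟨hA, ha0, hb0⟩ := hA
  have hφ {t : ℝ} (ht : 0 < t) := Real.hasDerivAt_mul_log_sub_self ht.ne'
  set e : Fin n → EuclideanSpace ℝ (Fin n) := fun i => EuclideanSpace.single i 1
  have hcoord i : HasGradientAt (fun B : EuclideanSpace ℝ (Fin n) => B i) (e i) A :=
    EuclideanSpace.hasGradientAt_apply i A
  have ha0_affine : HasGradientAt (fun B : EuclideanSpace ℝ (Fin n) => M1 - ∑ i, B i)
      (-∑ i, e i) A :=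
    (HasGradientAt.sum fun i _ => hcoord i).const_sub M1
  have hlinear := (HasGradientAt.sum fun i (_ : i ∈ univ) => (hcoord i).const_mul (L i)).neg
  have ha0_term := (hφ ha0).comp_hasGradientAt A ha0_affine
  have hB_terms := HasGradientAt.sum fun i (_ : i ∈ univ) =>
    (hφ (sub_pos.2 (hA i).2)).comp_hasGradientAt A ((hcoord i).const_sub (N i))
  have hA_terms := HasGradientAt.sum fun i (_ : i ∈ univ) =>
    (hφ (hA i).1).comp_hasGradientAt A (hcoord i)
  have hb0_term := (hφ (sub_pos.2 hb0)).comp_hasGradientAt A (ha0_affine.const_sub n0)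
  unfold glOR_G
  convert (((hlinear.add ha0_term).add hB_terms).add hA_terms).add hb0_term using 1
  ext j
  simp only [e, glOR_g, smul_neg, sum_neg_distrib, neg_neg, PiLp.add_apply, PiLp.neg_apply,
    WithLp.ofLp_sum, WithLp.ofLp_smul, PiLp.ofLp_single, Finset.sum_apply, Pi.smul_apply,
    Pi.single_apply, smul_eq_mul, mul_ite, mul_one, mul_zero, sum_ite_eq, mem_univ, ↓reduceIte]
  ring

/-- At every point of the open feasible set `U`, the GL odds-ratio objective `G` is
differentiable and its gradient is the GL residual map `g`; hence the GL root-finding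
problem `g(A) = 0` is exactly the stationarity condition `∇G(A) = 0`. -/
theorem glOR_hasGradientAt
    (n : ℕ) (hn : 1 ≤ n) (L N : Fin n → ℝ) (hN : ∀ i, 0 < N i)
    (n0 M1 : ℝ) (hn0 : 0 < n0) (hM1 : 0 < M1)
    (A : EuclideanSpace ℝ (Fin n))
    (hA : (∀ i, 0 < A i ∧ A i < N i) ∧ 0 < M1 - ∑ i, A i ∧ M1 - ∑ i, A i < n0) :
    HasGradientAt (glOR_G n L N n0 M1) (glOR_g n L N n0 M1 A) A :=
  glOR_hasGradientAt_general n L N n0 M1 A hA
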